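/- arXiv:1102.2989 — 2 statements merged into one kernel-verified Lean document; each statement's English description precedes it below -/
import Mathlib

section
/- The map (ρ,σ) ↦ Tr(ρ σ^{-1} ρ) - 1 (the χ² divergence for α ∈ {0,1}) is jointly convex on pairs of positive definite density matrices: for density matrices ρ₁,ρ₂,σ₁,σ₂ and λ ∈ [0,1], Tr(ρ̄ σ̄⁻¹ ρ̄) ≤ λ Tr(ρ₁σ₁⁻¹ρ₁) + (1-λ) Tr(ρ₂σ₂⁻¹ρ₂), where ρ̄ = λρ₁+(1-λ)ρ₂, σ̄ = λσ₁+(1-λ)σ₂. -/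
/-!
The Schur complement turns `Bᴴ A⁻¹ B` into the smallest `D` for which the block matrix
`[[A, B], [Bᴴ, D]]` is positive semidefinite. A convex combination of two such block matrices,
with `D = Bᵢᴴ Aᵢ⁻¹ Bᵢ`, is again positive semidefinite, so its Schur complement shows that
`(A, B) ↦ Bᴴ A⁻¹ B` is jointly convex in the Loewner order; taking traces gives the theorem.
-/

open Matrix ComplexOrder

namespace Matrix

variable {𝕜 : Type*} [RCLike 𝕜] {m n : Type*}

lemma PosDef.smul_add_one_sub_smul {A B : Matrix m m 𝕜} (hA : A.PosDef) (hB : B.PosDef) {l : ℝ}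
    (hl0 : 0 ≤ l) (hl1 : l ≤ 1) : (l • A + (1 - l) • B).PosDef := by
  rcases hl0.eq_or_lt with rfl | hl
  · simpa using hB
  · exact (hA.smul hl).add_posSemidef (hB.posSemidef.smul (sub_nonneg.2 hl1))

variable [Fintype m] [DecidableEq m] [Fintype n]

lemma PosDef.posSemidef_fromBlocks_conjTranspose_mul_inv_mul {A : Matrix m m 𝕜} (hA : A.PosDef)
    (B : Matrix m n 𝕜) : (fromBlocks A B Bᴴ (Bᴴ * A⁻¹ * B)).PosSemidef := by
  have := hA.isUnit.invertible
  rw [PosDef.fromBlocks₁₁ B _ hA, sub_self]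
  exact .zero

theorem PosDef.posSemidef_sub_conjTranspose_mul_inv_mul_smul_add_one_sub_smul
    {A₁ A₂ : Matrix m m 𝕜} (hA₁ : A₁.PosDef) (hA₂ : A₂.PosDef) (B₁ B₂ : Matrix m n 𝕜) {l : ℝ}
    (hl0 : 0 ≤ l) (hl1 : l ≤ 1) :
    (l • (B₁ᴴ * A₁⁻¹ * B₁) + (1 - l) • (B₂ᴴ * A₂⁻¹ * B₂) -
      (l • B₁ + (1 - l) • B₂)ᴴ * (l • A₁ + (1 - l) • A₂)⁻¹ * (l • B₁ + (1 - l) • B₂)).PosSemidef := by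
  have hA := hA₁.smul_add_one_sub_smul hA₂ hl0 hl1
  have := hA.isUnit.invertible
  rw [← PosDef.fromBlocks₁₁ _ _ hA]
  have hblocks := ((hA₁.posSemidef_fromBlocks_conjTranspose_mul_inv_mul B₁).smul hl0).add
    ((hA₂.posSemidef_fromBlocks_conjTranspose_mul_inv_mul B₂).smul (sub_nonneg.2 hl1))
  rw [fromBlocks_smul, fromBlocks_smul, fromBlocks_add] at hblocks
  simpa only [conjTranspose_add, conjTranspose_smul, star_trivial] using hblocks

end Matrix

theorem chi_sq_convex_alpha_zero_general {n : ℕ} (ρ₁ ρ₂ σ₁ σ₂ : Matrix (Fin n) (Fin n) ℂ)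
    (hρ₁ : ρ₁.PosDef) (hρ₂ : ρ₂.PosDef) (hσ₁ : σ₁.PosDef) (hσ₂ : σ₂.PosDef)
    (l : ℝ) (hl0 : 0 ≤ l) (hl1 : l ≤ 1) :
    (((l • ρ₁ + (1 - l) • ρ₂) * (l • σ₁ + (1 - l) • σ₂)⁻¹ *
        (l • ρ₁ + (1 - l) • ρ₂)).trace).re ≤
      l * ((ρ₁ * σ₁⁻¹ * ρ₁).trace).re + (1 - l) * ((ρ₂ * σ₂⁻¹ * ρ₂).trace).re := by
  have hρ : (l • ρ₁ + (1 - l) • ρ₂)ᴴ = l • ρ₁ + (1 - l) • ρ₂ := by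
    simp only [conjTranspose_add, conjTranspose_smul, star_trivial, hρ₁.1.eq, hρ₂.1.eq]
  have hconvex :=
    hσ₁.posSemidef_sub_conjTranspose_mul_inv_mul_smul_add_one_sub_smul hσ₂ ρ₁ ρ₂ hl0 hl1
  rw [hρ, hρ₁.1.eq, hρ₂.1.eq] at hconvex
  have htrace := Complex.re_le_re hconvex.trace_nonneg
  simp only [trace_sub, trace_add, trace_smul, Complex.sub_re, Complex.add_re, Complex.zero_re,
    Complex.real_smul, Complex.re_ofReal_mul] at htrace
  linarith

/-- Joint convexity of `(ρ,σ) ↦ Tr(ρ σ⁻¹ ρ) - 1` (the `χ²` divergence for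
`α ∈ {0,1}`) on pairs of positive definite density matrices. -/
theorem chi_sq_convex_alpha_zero {n : ℕ} (ρ₁ ρ₂ σ₁ σ₂ : Matrix (Fin n) (Fin n) ℂ)
    (hρ₁ : ρ₁.PosDef) (hρ₂ : ρ₂.PosDef) (hσ₁ : σ₁.PosDef) (hσ₂ : σ₂.PosDef)
    (hρ₁t : ρ₁.trace = 1) (hρ₂t : ρ₂.trace = 1) (hσ₁t : σ₁.trace = 1) (hσ₂t : σ₂.trace = 1)
    (l : ℝ) (hl0 : 0 ≤ l) (hl1 : l ≤ 1) :
    (((l • ρ₁ + (1 - l) • ρ₂) * (l • σ₁ + (1 - l) • σ₂)⁻¹ *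
        (l • ρ₁ + (1 - l) • ρ₂)).trace).re ≤
      l * ((ρ₁ * σ₁⁻¹ * ρ₁).trace).re + (1 - l) * ((ρ₂ * σ₂⁻¹ * ρ₂).trace).re :=
  chi_sq_convex_alpha_zero_general ρ₁ ρ₂ σ₁ σ₂ hρ₁ hρ₂ hσ₁ hσ₂ l hl0 hl1
end

section
/- If f : (0,∞) → (0,∞) is operator concave, then its perspective g(t,s) = s·f(t/s), evaluated in commuting positive definite operators, is jointly concave: for commuting positive definite operators (on a finite-dimensional Hilbert space) A₁, B₁ and A₂, B₂ with all four operators pairwise commuting, and λ ∈ [0,1], g(λA₁+(1-λ)A₂, λB₁+(1-λ)B₂) ≥ λ g(A₁,B₁) + (1-λ) g(A₂,B₂). -/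
/-
Testing operator concavity on scalar matrices `x • 1` shows that `f` is concave on `(0,∞)`,
and the perspective `(t, s) ↦ s f(t/s)` of a concave function is jointly concave. Commuting
operators are diagonal in a common eigenbasis, where the operator inequality reduces to the
scalar one entrywise.
-/

open Matrix ComplexOrder

/-- Functional calculus of `f : ℝ → ℝ` on a Hermitian matrix via the spectral
theorem. -/
noncomputable def herFun {n : ℕ} (f : ℝ → ℝ) {A : Matrix (Fin n) (Fin n) ℂ}
    (hA : A.IsHermitian) : Matrix (Fin n) (Fin n) ℂ :=
  (hA.eigenvectorUnitary : Matrix (Fin n) (Fin n) ℂ) *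
    Matrix.diagonal (Complex.ofReal ∘ f ∘ hA.eigenvalues) *
    star (hA.eigenvectorUnitary : Matrix (Fin n) (Fin n) ℂ)

/-- `f` is operator concave on `(0,∞)`: `f(λA+(1-λ)B) ≥ λf(A)+(1-λ)f(B)` in the
Loewner order, for positive definite `A, B`. -/
def OperatorConcave (f : ℝ → ℝ) : Prop :=
  ∀ (n : ℕ) (A B : Matrix (Fin n) (Fin n) ℂ) (hA : A.PosDef) (hB : B.PosDef)
    (l : ℝ), 0 ≤ l → l ≤ 1 →
    ∀ (hAB : (l • A + (1 - l) • B).PosDef),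
      (herFun f hAB.1 - (l • herFun f hA.1 + (1 - l) • herFun f hB.1)).PosSemidef

lemma herFun_eq_cfc {n : ℕ} (f : ℝ → ℝ) {A : Matrix (Fin n) (Fin n) ℂ}
    (hA : A.IsHermitian) : herFun f hA = cfc f A := by
  rw [hA.cfc_eq, IsHermitian.cfc, Unitary.conjStarAlgAut_apply]
  rfl

section algebraMap

variable {n : Type*} [Fintype n] [DecidableEq n] {r : ℝ}

lemma Matrix.posSemidef_algebraMap_iff [Nonempty n] :
    (algebraMap ℝ (Matrix n n ℂ) r).PosSemidef ↔ 0 ≤ r := by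
  simp [algebraMap_eq_diagonal]

lemma Matrix.posDef_algebraMap (hr : 0 < r) : (algebraMap ℝ (Matrix n n ℂ) r).PosDef := by
  simp [algebraMap_eq_diagonal, hr]

end algebraMap

lemma OperatorConcave.concaveOn {f : ℝ → ℝ} (hf : OperatorConcave f) :
    ConcaveOn ℝ (Set.Ioi 0) f := by
  refine ⟨convex_Ioi 0, fun x hx y hy a b ha hb hab => ?_⟩
  obtain rfl : b = 1 - a := by linarith
  let c := Algebra.linearMap ℝ (Matrix (Fin 1) (Fin 1) ℂ)
  have hxy : a • c x + (1 - a) • c y = c (a • x + (1 - a) • y) := by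
    rw [map_add, map_smul, map_smul]
  have hz : 0 < a • x + (1 - a) • y := convex_Ioi 0 hx hy ha hb hab
  have h := hf 1 (c x) (c y) (posDef_algebraMap hx) (posDef_algebraMap hy) a ha (by linarith)
    (hxy ▸ posDef_algebraMap hz)
  have hcfc (r : ℝ) : cfc f (c r) = c (f r) := cfc_algebraMap r f
  rw [herFun_eq_cfc, herFun_eq_cfc, herFun_eq_cfc, hxy, hcfc, hcfc, hcfc, ← map_smul,
    ← map_smul, ← map_add, ← map_sub] at h
  exact sub_nonneg.1 (posSemidef_algebraMap_iff.1 h)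

lemma ConcaveOn.perspective {f : ℝ → ℝ} (hf : ConcaveOn ℝ (Set.Ioi 0) f) :
    ConcaveOn ℝ (Set.Ioi 0 ×ˢ Set.Ioi 0) fun p : ℝ × ℝ => p.2 * f (p.1 / p.2) := by
  refine ⟨(convex_Ioi 0).prod (convex_Ioi 0), ?_⟩
  rintro ⟨x₁, y₁⟩ ⟨hx₁, hy₁⟩ ⟨x₂, y₂⟩ ⟨hx₂, hy₂⟩ a b ha hb hab
  simp only [Set.mem_Ioi] at hx₁ hy₁ hx₂ hy₂
  simp only [Prod.smul_mk, Prod.mk_add_mk, smul_eq_mul]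
  set s := a * y₁ + b * y₂
  have hs : 0 < s := convex_Ioi (0 : ℝ) hy₁ hy₂ ha hb hab
  -- concavity of `f` at the weights `a yᵢ / s`, then rescale by `s`
  have key := hf.2 (div_pos hx₁ hy₁) (div_pos hx₂ hy₂)
    (div_nonneg (mul_nonneg ha hy₁.le) hs.le) (div_nonneg (mul_nonneg hb hy₂.le) hs.le)
    (by rw [← add_div, div_self hs.ne'])
  simp only [smul_eq_mul] at key
  have harg : a * y₁ / s * (x₁ / y₁) + b * y₂ / s * (x₂ / y₂) = (a * x₁ + b * x₂) / s := by
    field_simp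
  rw [harg] at key
  calc a * (y₁ * f (x₁ / y₁)) + b * (y₂ * f (x₂ / y₂))
      = s * (a * y₁ / s * f (x₁ / y₁) + b * y₂ / s * f (x₂ / y₂)) := by field_simp
    _ ≤ s * f ((a * x₁ + b * x₂) / s) := mul_le_mul_of_nonneg_left key hs.le

section unitaryDiagonal

variable {n : Type*} [Fintype n] [DecidableEq n] (U : unitaryGroup n ℂ)

noncomputable def Matrix.unitaryDiagonal : (n → ℝ) →ₗ[ℝ] Matrix n n ℂ where
  toFun v := (U : Matrix n n ℂ) * diagonal (fun i => (v i : ℂ)) * star (U : Matrix n n ℂ)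
  map_add' v w := by
    simp only [Pi.add_apply, Complex.ofReal_add, ← diagonal_add, mul_add, add_mul]
  map_smul' r v := by
    have : (fun i => (((r • v) i : ℝ) : ℂ)) = r • fun i => (v i : ℂ) := by
      ext i; simp
    rw [RingHom.id_apply, this, diagonal_smul, mul_smul_comm, smul_mul_assoc]

lemma Matrix.posSemidef_unitaryDiagonal {v : n → ℝ} (hv : 0 ≤ v) :
    (unitaryDiagonal U v).PosSemidef :=
  (PosSemidef.diagonal fun i => Complex.zero_le_real.2 (hv i)).mul_mul_conjTranspose_same _

end unitaryDiagonal

/-- The four pairwise-commuting positive definite operators are presented in a simultaneous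
orthonormal eigenbasis, given by a common unitary `U` and positive eigenvalue lists
`a₁, a₂, b₁, b₂`; in this basis the joint functional calculus reads
`g(A,B) = U · diag(b i · f(a i / b i)) · U*`. -/
theorem perspective_jointly_concave_general {n : ℕ} (f : ℝ → ℝ)
    (hf : OperatorConcave f)
    (U : Matrix.unitaryGroup (Fin n) ℂ) (a₁ a₂ b₁ b₂ : Fin n → ℝ)
    (ha₁ : ∀ i, 0 < a₁ i) (ha₂ : ∀ i, 0 < a₂ i)
    (hb₁ : ∀ i, 0 < b₁ i) (hb₂ : ∀ i, 0 < b₂ i)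
    (l : ℝ) (hl0 : 0 ≤ l) (hl1 : l ≤ 1)
    (g : (Fin n → ℝ) → (Fin n → ℝ) → Matrix (Fin n) (Fin n) ℂ)
    (hg : ∀ a b, g a b = (U : Matrix (Fin n) (Fin n) ℂ) *
      Matrix.diagonal (fun i => ((b i * f (a i / b i) : ℝ) : ℂ)) *
      star (U : Matrix (Fin n) (Fin n) ℂ)) :
    (g (fun i => l * a₁ i + (1 - l) * a₂ i) (fun i => l * b₁ i + (1 - l) * b₂ i) -
      (l • g a₁ b₁ + (1 - l) • g a₂ b₂)).PosSemidef := by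
  have hpersp (i : Fin n) :=
    hf.concaveOn.perspective.2 (x := (a₁ i, b₁ i)) (y := (a₂ i, b₂ i)) ⟨ha₁ i, hb₁ i⟩
      ⟨ha₂ i, hb₂ i⟩ hl0 (sub_nonneg.2 hl1) (add_sub_cancel l 1)
  have hg' (a b : Fin n → ℝ) : g a b = unitaryDiagonal U fun i => b i * f (a i / b i) := hg a b
  rw [hg', hg', hg', ← map_smul, ← map_smul, ← map_add, ← map_sub]
  exact posSemidef_unitaryDiagonal U fun i => sub_nonneg.2 (hpersp i)

/-- Joint concavity of the perspective `g(t,s) = s·f(t/s)` of an operator concave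
function `f`, evaluated in commuting positive definite operators.  The four
pairwise-commuting positive definite operators are presented in a simultaneous
orthonormal eigenbasis, given by a common unitary `U` and positive eigenvalue
lists `a₁, a₂, b₁, b₂`; in this basis the joint functional calculus reads
`g(A,B) = U · diag(b i · f(a i / b i)) · U*`. -/
theorem perspective_jointly_concave {n : ℕ} (f : ℝ → ℝ)
    (hfpos : ∀ t : ℝ, 0 < t → 0 < f t) (hf : OperatorConcave f)
    (U : Matrix.unitaryGroup (Fin n) ℂ) (a₁ a₂ b₁ b₂ : Fin n → ℝ)
    (ha₁ : ∀ i, 0 < a₁ i) (ha₂ : ∀ i, 0 < a₂ i)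
    (hb₁ : ∀ i, 0 < b₁ i) (hb₂ : ∀ i, 0 < b₂ i)
    (l : ℝ) (hl0 : 0 ≤ l) (hl1 : l ≤ 1)
    (g : (Fin n → ℝ) → (Fin n → ℝ) → Matrix (Fin n) (Fin n) ℂ)
    (hg : ∀ a b, g a b = (U : Matrix (Fin n) (Fin n) ℂ) *
      Matrix.diagonal (fun i => ((b i * f (a i / b i) : ℝ) : ℂ)) *
      star (U : Matrix (Fin n) (Fin n) ℂ)) :
    (g (fun i => l * a₁ i + (1 - l) * a₂ i) (fun i => l * b₁ i + (1 - l) * b₂ i) -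
      (l • g a₁ b₁ + (1 - l) • g a₂ b₂)).PosSemidef :=
  perspective_jointly_concave_general f hf U a₁ a₂ b₁ b₂ ha₁ ha₂ hb₁ hb₂ l hl0 hl1 g hg
end
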